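/- Let S, T ⊆ [ω₂]^ω and let A_S, A_T be disjoint stationary subsets of ω₁ such that S is A_S-projective stationary and T is A_T-projective stationary. Then the set P(S,T) = {σ ∈ [ω₂]^ω : (σ ∩ ω₁ ∈ A_S → σ ∈ S) ∧ (σ ∩ ω₁ ∈ A_T → σ ∈ T)} is projective stationary. -/

import Mathlib

/-- The first uncountable ordinal. -/
noncomputable def ω1 : Ordinal.{0} := (Cardinal.aleph 1).ord
/-- The second uncountable ordinal. -/
noncomputable def ω2 : Ordinal.{0} := (Cardinal.aleph 2).ord

-- The order type of a set of ordinals (correct whenever the set is small, e.g. countable).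
open Classical in
noncomputable def otp (σ : Set Ordinal.{0}) : Ordinal.{0} :=
  if h : ∃ o : Ordinal.{0}, Ordinal.lift.{1, 0} o =
      Ordinal.type ((· < ·) : σ → σ → Prop) then h.choose else 0

/-- `σ ∈ [α]^ω`: σ is a countably infinite subset of (the ordinals below) α. -/
def MemCtble (α : Ordinal.{0}) (σ : Set Ordinal.{0}) : Prop :=
  σ.Countable ∧ σ.Infinite ∧ ∀ x ∈ σ, x < α

/-- `C` is a club subset of `[α]^ω`: all members lie in `[α]^ω`, `C` is closed under
unions of increasing ω-chains, and `C` is cofinal under inclusion. -/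
def IsClubIn (α : Ordinal.{0}) (C : Set (Set Ordinal.{0})) : Prop :=
  (∀ σ ∈ C, MemCtble α σ) ∧
  (∀ f : ℕ → Set Ordinal.{0}, (∀ n, f n ∈ C) → (∀ n, f n ⊆ f (n + 1)) →
    (⋃ n, f n) ∈ C) ∧
  (∀ σ, MemCtble α σ → ∃ τ ∈ C, σ ⊆ τ)

/-- `S` is stationary in `[α]^ω`: it meets every club of `[α]^ω`. -/
def StatIn (α : Ordinal.{0}) (S : Set (Set Ordinal.{0})) : Prop :=
  ∀ C, IsClubIn α C → (S ∩ C).Nonempty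

/-- `C` is a closed unbounded subset of the ordinal `κ`. -/
def IsClubBelow (κ : Ordinal.{0}) (C : Set Ordinal.{0}) : Prop :=
  (∀ x ∈ C, x < κ) ∧ (∀ β < κ, ∃ x ∈ C, β ≤ x) ∧
  (∀ S : Set Ordinal.{0}, S ⊆ C → S.Nonempty → sSup S < κ → sSup S ∈ C)

/-- `S` is a stationary subset of the ordinal `κ`: it meets every club of `κ`. -/
def StatBelow (κ : Ordinal.{0}) (S : Set Ordinal.{0}) : Prop :=
  ∀ C, IsClubBelow κ C → (S ∩ C).Nonempty

/-- The tilde operation: `α ∈ tilde X` iff `ω1 ≤ α < ω2` and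
`{σ ∈ [α]^ω : otp σ ∈ X}` contains a club of `[α]^ω`. -/
def tilde (X : Set Ordinal.{0}) : Set Ordinal.{0} :=
  {α | ω1 ≤ α ∧ α < ω2 ∧ ∃ C, IsClubIn α C ∧ C ⊆ {σ | otp σ ∈ X}}

/-- `σ ∩ ω₁` equals the ordinal `γ` (i.e. as sets, `σ ∩ ω₁ = {x : x < γ}`). -/
def MeetO1 (σ : Set Ordinal.{0}) (γ : Ordinal.{0}) : Prop :=
  σ ∩ Set.Iio ω1 = Set.Iio γ

/-- `S ⊆ [ω₂]^ω` is `A`-projective stationary. -/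
def ProjStatOn (A : Set Ordinal.{0}) (S : Set (Set Ordinal.{0})) : Prop :=
  ∀ B ⊆ A, StatBelow ω1 B → StatIn ω2 {σ | σ ∈ S ∧ ∃ γ ∈ B, MeetO1 σ γ}

/-- `S ⊆ [ω₂]^ω` is projective stationary. -/
def ProjStat (S : Set (Set Ordinal.{0})) : Prop :=
  ∀ B : Set Ordinal.{0}, (∀ x ∈ B, x < ω1) → StatBelow ω1 B →
    StatIn ω2 {σ | σ ∈ S ∧ ∃ γ ∈ B, MeetO1 σ γ}

/-! Split a stationary `B ⊆ ω₁` into `B ∩ A_S`, `B ∩ A_T` and `B \ (A_S ∪ A_T)`. The club filter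
on `ω₁` is closed under finite intersections, so one of the pieces is stationary. On the first two
pieces projective stationarity of `S` (resp. `T`) supplies σ, and disjointness of `A_S` and `A_T`
makes the other clause of `P(S,T)` vacuous. On the third piece both clauses are vacuous, so it
suffices that every club `C` of `[ω₂]^ω` contains some σ with `σ ∩ ω₁ ∈ B`: choose an increasing
chain `N_α ∈ C` (`α < ω₁`) with `α ⊆ N_α`, and a closure point `γ ∈ B` of `β ↦ sup (N_β ∩ ω₁)`;
the union of an ω-subchain cofinal in `γ` lies in `C` and meets `ω₁` exactly in `γ`. -/

open Cardinal Ordinal Set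

section ClubBelow

variable {κ : Ordinal.{0}} {c : Cardinal.{0}} {C C₁ C₂ X Y : Set Ordinal.{0}}

def closurePoints (κ : Ordinal.{0}) (g : Ordinal.{0} → Ordinal.{0}) : Set Ordinal.{0} :=
  {γ | γ < κ ∧ 0 < γ ∧ ∀ β < γ, g β < γ}

theorem IsClubBelow.mem_of_forall_lt_exists (hC : IsClubBelow κ C) {γ : Ordinal.{0}}
    (hγ : γ < κ) (hγ₀ : 0 < γ) (hcof : ∀ β < γ, ∃ x ∈ C, β < x ∧ x < γ) : γ ∈ C := by
  obtain ⟨x₀, hx₀C, -, hx₀γ⟩ := hcof 0 hγ₀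
  have hsup : sSup (C ∩ Iio γ) = γ := by
    refine csSup_eq_of_forall_le_of_forall_lt_exists_gt ⟨x₀, hx₀C, hx₀γ⟩
      (fun x hx => le_of_lt hx.2) fun β hβ => ?_
    obtain ⟨x, hxC, hβx, hxγ⟩ := hcof β hβ
    exact ⟨x, ⟨hxC, hxγ⟩, hβx⟩
  have hmem : sSup (C ∩ Iio γ) ∈ C :=
    hC.2.2 _ inter_subset_left ⟨x₀, hx₀C, hx₀γ⟩ (hsup.trans_lt hγ)
  rwa [hsup] at hmem

theorem isClubBelow_closurePoints (hc : c.IsRegular) (hc₀ : c ≠ ℵ₀)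
    {g : Ordinal.{0} → Ordinal.{0}} (hg : ∀ β < c.ord, g β < c.ord) :
    IsClubBelow c.ord (closurePoints c.ord g) := by
  refine ⟨fun γ hγ => hγ.1, fun β₀ hβ₀ => ?_, fun s hs hne hlt => ?_⟩
  · -- Iterating `δ ↦ succ (⨆ β < δ, g β)` ω times from `β₀` reaches a closure point.
    set F : Ordinal.{0} → Ordinal.{0} := fun δ => Order.succ (⨆ β : Iio δ, g β)
    have hF : ∀ δ < c.ord, F δ < c.ord := fun δ hδ =>
      (isSuccLimit_ord hc.aleph0_le).succ_lt <| lift_iSup_lt_of_lt_cof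
        (by rwa [← lift_cof, hc.cof_ord, Cardinal.mk_Iio_ordinal, Cardinal.lift_lift,
          Cardinal.lift_lt, ← lt_ord])
        fun β => hg β (β.2.trans hδ)
    refine ⟨nfp F β₀, ⟨nfp_lt_ord_of_isRegular hc hc₀ hF hβ₀, ?_, fun β hβ => ?_⟩, le_nfp F β₀⟩
    · exact (Order.bot_lt_succ _).trans_le (iterate_le_nfp F β₀ 1)
    · obtain ⟨n, hn⟩ := lt_nfp_iff.1 hβ
      calc g β ≤ ⨆ β : Iio (F^[n] β₀), g β := Ordinal.le_iSup (fun β : Iio _ => g β) ⟨β, hn⟩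
        _ < F^[n + 1] β₀ := by rw [Function.iterate_succ_apply']; exact Order.lt_succ _
        _ ≤ nfp F β₀ := iterate_le_nfp F β₀ (n + 1)
  · have hbdd : BddAbove s := ⟨c.ord, fun x hx => (hs hx).1.le⟩
    obtain ⟨γ, hγ⟩ := hne
    refine ⟨hlt, (hs hγ).2.1.trans_le (le_csSup hbdd hγ), fun β hβ => ?_⟩
    obtain ⟨x, hx, hβx⟩ := exists_lt_of_lt_csSup ⟨γ, hγ⟩ hβ
    exact ((hs hx).2.2 β hβx).trans_le (le_csSup hbdd hx)

theorem IsClubBelow.inter (hc : c.IsRegular) (hc₀ : c ≠ ℵ₀) (h₁ : IsClubBelow c.ord C₁)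
    (h₂ : IsClubBelow c.ord C₂) : IsClubBelow c.ord (C₁ ∩ C₂) := by
  refine ⟨fun x hx => h₁.1 x hx.1, fun β₀ hβ₀ => ?_, fun s hs hne hlt =>
    ⟨h₁.2.2 s (fun x hx => (hs hx).1) hne hlt, h₂.2.2 s (fun x hx => (hs hx).2) hne hlt⟩⟩
  have hsucc : ∀ β < c.ord, Order.succ β < c.ord := fun β =>
    (isSuccLimit_ord hc.aleph0_le).succ_lt
  choose! a haC hβa using fun β (hβ : β < c.ord) => h₁.2.1 _ (hsucc β hβ)
  choose! b hbC hβb using fun β (hβ : β < c.ord) => h₂.2.1 _ (hsucc β hβ)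
  obtain ⟨γ, ⟨hγ, hγ₀, hγab⟩, hβ₀γ⟩ :=
    (isClubBelow_closurePoints hc hc₀ (g := fun β => max (a β) (b β))
      fun β hβ => max_lt (h₁.1 _ (haC β hβ)) (h₂.1 _ (hbC β hβ))).2.1 β₀ hβ₀
  refine ⟨γ, ⟨h₁.mem_of_forall_lt_exists hγ hγ₀ fun β hβ => ?_,
    h₂.mem_of_forall_lt_exists hγ hγ₀ fun β hβ => ?_⟩, hβ₀γ⟩
  · exact ⟨a β, haC β (hβ.trans hγ), (Order.lt_succ β).trans_le (hβa β (hβ.trans hγ)),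
      (le_max_left _ _).trans_lt (hγab β hβ)⟩
  · exact ⟨b β, hbC β (hβ.trans hγ), (Order.lt_succ β).trans_le (hβb β (hβ.trans hγ)),
      (le_max_right _ _).trans_lt (hγab β hβ)⟩

theorem StatBelow.mono (hX : StatBelow κ X) (h : X ⊆ Y) : StatBelow κ Y := fun C hC =>
  (hX C hC).mono (inter_subset_inter_left _ h)

theorem StatBelow.or_of_union (hc : c.IsRegular) (hc₀ : c ≠ ℵ₀) (h : StatBelow c.ord (X ∪ Y)) :
    StatBelow c.ord X ∨ StatBelow c.ord Y := by
  by_contra! hXY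
  simp only [StatBelow, not_forall, not_nonempty_iff_eq_empty] at hXY
  obtain ⟨⟨C₁, h₁, hX⟩, ⟨C₂, h₂, hY⟩⟩ := hXY
  obtain ⟨γ, hγ | hγ, hγ₁, hγ₂⟩ := h _ (h₁.inter hc hc₀ h₂)
  · exact (hX ▸ ⟨hγ, hγ₁⟩ : γ ∈ (∅ : Set Ordinal)).elim
  · exact (hY ▸ ⟨hγ, hγ₂⟩ : γ ∈ (∅ : Set Ordinal)).elim

end ClubBelow

theorem omega1_lt_omega2 : ω1 < ω2 := ord_lt_ord.2 (aleph_lt_aleph.2 one_lt_two)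

theorem omega0_lt_omega1 : ω < ω1 := lt_ord.2 (card_omega0 ▸ aleph0_lt_aleph_one)

theorem countable_Iio_of_lt_omega1 {α : Ordinal.{0}} (h : α < ω1) : (Iio α).Countable :=
  le_aleph0_iff_set_countable.1 <| by
    rwa [Cardinal.mk_Iio_ordinal, lift_le_aleph0, ← lt_aleph_one_iff, ← lt_ord]

theorem sSup_lt_omega1 {s : Set Ordinal.{0}} (hs : s.Countable) (h : ∀ x ∈ s, x < ω1) :
    sSup s < ω1 := by
  have := hs.to_subtype
  rw [ω1, ord_aleph] at h ⊢
  rw [sSup_eq_iSup']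
  exact iSup_lt_omega_one fun x => h x x.2

theorem memCtble_Iio {γ : Ordinal.{0}} (hω : ω ≤ γ) (hγ : γ < ω1) : MemCtble ω2 (Iio γ) :=
  ⟨countable_Iio_of_lt_omega1 hγ,
    (infinite_of_injective_forall_mem Nat.cast_injective natCast_lt_omega0).mono
      (Iio_subset_Iio hω),
    fun _ hx => (hx.trans hγ).trans omega1_lt_omega2⟩

theorem MeetO1.exists_mem_iff {σ : Set Ordinal.{0}} {γ : Ordinal.{0}} (h : MeetO1 σ γ)
    {A : Set Ordinal.{0}} : (∃ γ' ∈ A, MeetO1 σ γ') ↔ γ ∈ A :=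
  ⟨fun ⟨_, hγ', h'⟩ => Iio_inj.1 (h.symm.trans h') ▸ hγ', fun hγ => ⟨γ, hγ, h⟩⟩

theorem StatIn.mono_of_memCtble {α : Ordinal.{0}} {X Y : Set (Set Ordinal.{0})}
    (hX : StatIn α X) (h : ∀ σ ∈ X, MemCtble α σ → σ ∈ Y) : StatIn α Y := fun C hC =>
  let ⟨σ, hσX, hσC⟩ := hX C hC
  ⟨σ, h σ hσX (hC.1 σ hσC), hσC⟩

-- `α + ω` rather than `α + 1`, so that `next` is always applied to an infinite set.
noncomputable def clubChain (next : Set Ordinal.{0} → Set Ordinal.{0}) :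
    Ordinal.{0} → Set Ordinal.{0} :=
  WellFoundedLT.fix fun α N => next (Iio (α + ω) ∪ ⋃ β : Iio α, N β β.2)

theorem clubChain_eq (next : Set Ordinal.{0} → Set Ordinal.{0}) (α : Ordinal.{0}) :
    clubChain next α = next (Iio (α + ω) ∪ ⋃ β : Iio α, clubChain next β) :=
  WellFoundedLT.fix_eq _ α

theorem IsClubIn.exists_monotoneOn_chain {C : Set (Set Ordinal.{0})} (hC : IsClubIn ω2 C) :
    ∃ N : Ordinal.{0} → Set Ordinal.{0}, MonotoneOn N (Iio ω1) ∧
      ∀ α < ω1, N α ∈ C ∧ Iic α ⊆ N α := by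
  choose! next hnextC hsub using hC.2.2
  have key : ∀ α < ω1, clubChain next α ∈ C ∧
      Iio (α + ω) ∪ ⋃ β : Iio α, clubChain next β ⊆ clubChain next α := by
    intro α
    induction α using WellFoundedLT.induction with | ind α ih
    intro hα
    have hprev : ∀ β : Iio α, MemCtble ω2 (clubChain next β) := fun β =>
      hC.1 _ (ih β β.2 (β.2.trans hα)).1
    have hbase : MemCtble ω2 (Iio (α + ω) ∪ ⋃ β : Iio α, clubChain next β) := by
      have := (countable_Iio_of_lt_omega1 hα).to_subtype
      obtain ⟨hcount, hinf, hlt⟩ := memCtble_Iio le_add_self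
        (isPrincipal_add_ord (aleph0_le_aleph 1) hα omega0_lt_omega1)
      refine ⟨hcount.union (countable_iUnion fun β => (hprev β).1), hinf.mono subset_union_left, ?_⟩
      rintro x (hx | hx)
      · exact hlt x hx
      · obtain ⟨β, hβ⟩ := mem_iUnion.1 hx
        exact (hprev β).2.2 x hβ
    rw [clubChain_eq next α]
    exact ⟨hnextC _ hbase, hsub _ hbase⟩
  refine ⟨clubChain next, fun β _ α hα hβα => ?_, fun α hα => ⟨(key α hα).1, fun x hx =>
    (key α hα).2 (Or.inl (hx.trans_lt (lt_add_of_pos_right α omega0_pos)))⟩⟩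
  rcases hβα.eq_or_lt with rfl | hlt
  · rfl
  · exact fun x hx => (key α hα).2 (Or.inr (mem_iUnion.2 ⟨⟨β, hlt⟩, hx⟩))

theorem exists_meetO1_of_mem_closurePoints {C : Set (Set Ordinal.{0})} (hC : IsClubIn ω2 C)
    {N : Ordinal.{0} → Set Ordinal.{0}} (hN_mono : MonotoneOn N (Iio ω1))
    (hN : ∀ α < ω1, N α ∈ C ∧ Iic α ⊆ N α) {γ : Ordinal.{0}}
    (hγ : γ ∈ closurePoints ω1 fun β => sSup (N β ∩ Iio ω1)) : ∃ τ ∈ C, MeetO1 τ γ := by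
  obtain ⟨hγ₁, hγ₀, hγN⟩ := hγ
  obtain ⟨f, hf⟩ := (countable_Iio_of_lt_omega1 hγ₁).exists_eq_range (⟨0, hγ₀⟩ : (Iio γ).Nonempty)
  have hbγ : ∀ n, partialSups f n < γ := fun n =>
    (partialSups_iff_forall (· < γ) sup_lt_iff).2 fun j _ =>
      show f j ∈ Iio γ from hf ▸ mem_range_self j
  have hb₁ : ∀ n, partialSups f n < ω1 := fun n => (hbγ n).trans hγ₁
  refine ⟨⋃ n, N (partialSups f n), hC.2.1 _ (fun n => (hN _ (hb₁ n)).1) fun n =>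
    hN_mono (hb₁ n) (hb₁ (n + 1)) (partialSups_monotone f n.le_succ), Set.ext fun x => ⟨?_, ?_⟩⟩
  · rintro ⟨hx, hxω₁⟩
    obtain ⟨n, hn⟩ := mem_iUnion.1 hx
    exact (le_csSup (bddAbove_Iio.mono inter_subset_right) ⟨hn, hxω₁⟩).trans_lt (hγN _ (hbγ n))
  · intro hx
    obtain ⟨n, rfl⟩ : x ∈ range f := hf ▸ hx
    exact ⟨mem_iUnion.2 ⟨n, (hN _ (hb₁ n)).2 (le_partialSups f n)⟩, hx.trans hγ₁⟩

theorem statIn_meetO1 {B : Set Ordinal.{0}} (hB : StatBelow ω1 B) :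
    StatIn ω2 {σ | ∃ γ ∈ B, MeetO1 σ γ} := by
  intro C hC
  obtain ⟨N, hN_mono, hN⟩ := hC.exists_monotoneOn_chain
  have hg : ∀ β < ω1, sSup (N β ∩ Iio ω1) < ω1 := fun β hβ =>
    sSup_lt_omega1 ((hC.1 _ (hN β hβ).1).1.mono inter_subset_left) fun _ hx => hx.2
  obtain ⟨γ, hγB, hγ⟩ := hB _ (isClubBelow_closurePoints isRegular_aleph_one
    aleph0_lt_aleph_one.ne' hg)
  obtain ⟨τ, hτC, hτγ⟩ := exists_meetO1_of_mem_closurePoints hC hN_mono hN hγ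
  exact ⟨τ, ⟨γ, hγB, hτγ⟩, hτC⟩

theorem pst_projective_stationary_general (S T : Set (Set Ordinal.{0}))
    (AS AT : Set Ordinal.{0})
    (hd : Disjoint AS AT)
    (hS : ProjStatOn AS S) (hT : ProjStatOn AT T) :
    ProjStat {σ | MemCtble ω2 σ ∧
      ((∃ γ ∈ AS, MeetO1 σ γ) → σ ∈ S) ∧ ((∃ γ ∈ AT, MeetO1 σ γ) → σ ∈ T)} := by
  intro B _ hB
  have hsplit : B ⊆ (B ∩ AS ∪ B ∩ AT) ∪ B \ (AS ∪ AT) := fun γ hγ => by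
    by_cases γ ∈ AS <;> by_cases γ ∈ AT <;> simp_all
  have hreg := isRegular_aleph_one
  have hne := aleph0_lt_aleph_one.ne'
  rcases (hB.mono hsplit).or_of_union hreg hne with hB' | hBo
  rcases hB'.or_of_union hreg hne with hBS | hBT
  · refine (hS _ inter_subset_right hBS).mono_of_memCtble
      fun σ ⟨hσS, γ, ⟨hγB, hγS⟩, hσγ⟩ hσ => ⟨⟨hσ, fun _ => hσS, fun h => ?_⟩, γ, hγB, hσγ⟩
    exact absurd (hσγ.exists_mem_iff.1 h) (disjoint_left.1 hd hγS)
  · refine (hT _ inter_subset_right hBT).mono_of_memCtble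
      fun σ ⟨hσT, γ, ⟨hγB, hγT⟩, hσγ⟩ hσ => ⟨⟨hσ, fun h => ?_, fun _ => hσT⟩, γ, hγB, hσγ⟩
    exact absurd (hσγ.exists_mem_iff.1 h) (disjoint_right.1 hd hγT)
  · refine (statIn_meetO1 hBo).mono_of_memCtble
      fun σ ⟨γ, ⟨hγB, hγ⟩, hσγ⟩ hσ => ⟨⟨hσ, fun h => ?_, fun h => ?_⟩, γ, hγB, hσγ⟩
    · exact absurd (Or.inl (hσγ.exists_mem_iff.1 h)) hγ
    · exact absurd (Or.inr (hσγ.exists_mem_iff.1 h)) hγ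

theorem pst_projective_stationary (S T : Set (Set Ordinal.{0}))
    (AS AT : Set Ordinal.{0})
    (hAS : ∀ x ∈ AS, x < ω1) (hAT : ∀ x ∈ AT, x < ω1)
    (hASs : StatBelow ω1 AS) (hATs : StatBelow ω1 AT)
    (hd : Disjoint AS AT)
    (hS : ProjStatOn AS S) (hT : ProjStatOn AT T) :
    ProjStat {σ | MemCtble ω2 σ ∧
      ((∃ γ ∈ AS, MeetO1 σ γ) → σ ∈ S) ∧ ((∃ γ ∈ AT, MeetO1 σ γ) → σ ∈ T)} :=
  pst_projective_stationary_general S T AS AT hd hS hT
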